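/- Let H₁ and H₂ be complex Hilbert spaces, let T₂ : H₁ → H₂ be a bounded linear operator with dense range, let T₁ : H₂ → H₁ be a nonzero compact bounded linear operator with dense range, and set N = T₁ ∘ T₂. Let φ ∈ H₁. Then: (i) for every ε > 0 there exists g ∈ H₁ with ‖N g − φ‖ < ε; (ii) if φ lies in the range of T₁, then there exists M ≥ 0 such that for every ε > 0 the element g in (i) can be chosen with ‖T₂ g‖ ≤ M; (iii) if φ does not lie in the range of T₁, then for every sequence (gₙ) with ‖N gₙ − φ‖ → 0 one has ‖T₂ gₙ‖ → ∞. (This is the abstract operator form of the dichotomy in Theorem 2 of the paper, where H₂ is the data space H on Γ ∪ ∂Ω, T₂ = T^{A→Γ,Ω}, T₁ = T^{Γ,Ω→A}, and φ = G(·,z)|_A.) -/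

import Mathlib

/-!
Part (i) is density of the range of `T₁ ∘ T₂`, and (ii) follows by approximating a preimage
`ψ` of `φ` by elements `T₂ g`, which are then bounded by `‖ψ‖ + 1`. For (iii), closed balls of a
Hilbert space are weakly compact (Banach–Alaoglu transported through the Riesz isomorphism), so a
bounded operator maps them onto weakly compact, hence norm-closed, sets. If `‖T₂ gₙ‖` stayed
below some `r` along a subsequence, `φ` would be a limit of points of `T₁ '' closedBall 0 r`,
hence in the range of `T₁`.
-/

open Filter Metric Topology InnerProductSpace

section WeakCompactness

variable {𝕜 H : Type*} [RCLike 𝕜] [NormedAddCommGroup H] [InnerProductSpace 𝕜 H] [CompleteSpace H]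

theorem continuous_toWeakSpace_toDual_symm :
    Continuous fun f : WeakDual 𝕜 H =>
      toWeakSpace 𝕜 H ((toDual 𝕜 H).symm (WeakDual.toStrongDual f)) := by
  refine WeakBilin.continuous_of_continuous_eval _ fun l => ?_
  have key (f : WeakDual 𝕜 H) : l ((toDual 𝕜 H).symm (WeakDual.toStrongDual f))
      = starRingEnd 𝕜 (f ((toDual 𝕜 H).symm l)) := by
    rw [← WeakDual.toStrongDual_apply, ← toDual_symm_apply, ← toDual_symm_apply, inner_conj_symm]
  exact (RCLike.continuous_conj.comp (WeakDual.eval_continuous _)).congr fun f => (key f).symm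

theorem isCompact_toWeakSpace_closedBall (x : H) (r : ℝ) :
    IsCompact (toWeakSpace 𝕜 H '' closedBall x r) := by
  have hball : WeakDual.toStrongDual ⁻¹' closedBall (toDual 𝕜 H x) r
      = (fun y => WeakDual.toStrongDual.symm (toDual 𝕜 H y)) '' closedBall x r := by
    ext f
    constructor
    · intro hf
      refine ⟨(toDual 𝕜 H).symm (WeakDual.toStrongDual f), ?_, by simp⟩
      simpa [← (toDual 𝕜 H).symm.dist_map] using hf
    · rintro ⟨y, hy, rfl⟩
      simpa using hy
  convert (WeakDual.isCompact_closedBall (toDual 𝕜 H x) r).image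
    (continuous_toWeakSpace_toDual_symm (𝕜 := 𝕜) (H := H)) using 1
  rw [hball, Set.image_image]
  simp

theorem ContinuousLinearMap.isClosed_image_closedBall {F : Type*} [NormedAddCommGroup F]
    [NormedSpace 𝕜 F] (T : H →L[𝕜] F) (x : H) (r : ℝ) :
    IsClosed (T '' closedBall x r) := by
  have hweak : IsCompact (toWeakSpace 𝕜 F '' (T '' closedBall x r)) := by
    have := (isCompact_toWeakSpace_closedBall x r).image (WeakSpace.map T).continuous
    rwa [Set.image_image] at this ⊢
  rw [← (toWeakSpace 𝕜 F).injective.preimage_image (T '' closedBall x r)]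
  exact hweak.isClosed.preimage (toWeakSpaceCLM 𝕜 F).continuous

end WeakCompactness

theorem DenseRange.exists_norm_comp_sub_lt_and_norm_le {α E F : Type*} [NormedAddCommGroup E]
    [NormedAddCommGroup F] {S : α → E} (hS : DenseRange S) {T : E → F} (hT : Continuous T)
    (ψ : E) {ε : ℝ} (hε : 0 < ε) :
    ∃ g, ‖T (S g) - T ψ‖ < ε ∧ ‖S g‖ ≤ ‖ψ‖ + 1 := by
  have hopen : IsOpen ({y | ‖T y - T ψ‖ < ε} ∩ ball ψ 1) :=
    (isOpen_lt (by fun_prop) continuous_const).inter isOpen_ball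
  obtain ⟨g, hTg, hg⟩ := hS.exists_mem_open hopen ⟨ψ, by simpa using hε, mem_ball_self one_pos⟩
  refine ⟨g, hTg, ?_⟩
  calc ‖S g‖ ≤ ‖ψ‖ + ‖S g - ψ‖ := norm_le_norm_add_norm_sub' _ _
    _ ≤ ‖ψ‖ + 1 := by simpa [dist_eq_norm] using (mem_ball.1 hg).le

theorem tendsto_norm_atTop_of_tendsto_notMem_range {ι E F : Type*} [NormedAddCommGroup E]
    [TopologicalSpace F] {T : E → F} (hT : ∀ r, IsClosed (T '' closedBall 0 r))
    {l : Filter ι} {z : ι → E} {φ : F} (hz : Tendsto (T ∘ z) l (𝓝 φ))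
    (hφ : φ ∉ Set.range T) : Tendsto (‖z ·‖) l atTop := by
  refine tendsto_atTop.2 fun r => ?_
  by_contra hfreq
  have hsmall : ∃ᶠ i in l, (T ∘ z) i ∈ T '' closedBall 0 r :=
    (not_eventually.1 hfreq).mono fun i hi => ⟨z i, by simpa using (not_le.1 hi).le, rfl⟩
  obtain ⟨y, -, hy⟩ := (hT r).mem_of_frequently_of_tendsto hsmall hz
  exact hφ ⟨y, hy⟩

theorem stmt_3_general
    {H₁ H₂ : Type*}
    [NormedAddCommGroup H₁] [InnerProductSpace ℂ H₁]
    [NormedAddCommGroup H₂] [InnerProductSpace ℂ H₂] [CompleteSpace H₂]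
    (T₂ : H₁ →L[ℂ] H₂) (hT₂ : DenseRange T₂)
    (T₁ : H₂ →L[ℂ] H₁)
    (hT₁d : DenseRange T₁)
    (N : H₁ →L[ℂ] H₁) (hN : N = T₁.comp T₂)
    (φ : H₁) :
    (∀ ε : ℝ, 0 < ε → ∃ g : H₁, ‖N g - φ‖ < ε) ∧
    (φ ∈ Set.range T₁ →
      ∃ M : ℝ, 0 ≤ M ∧ ∀ ε : ℝ, 0 < ε →
        ∃ g : H₁, ‖N g - φ‖ < ε ∧ ‖T₂ g‖ ≤ M) ∧
    (φ ∉ Set.range T₁ →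
      ∀ g : ℕ → H₁,
        Filter.Tendsto (fun n => ‖N (g n) - φ‖) Filter.atTop (nhds 0) →
        Filter.Tendsto (fun n => ‖T₂ (g n)‖) Filter.atTop Filter.atTop) := by
  subst hN
  refine ⟨fun ε hε => ?_, ?_, fun hφ g hg => ?_⟩
  · obtain ⟨g, hg⟩ := (hT₁d.comp hT₂ T₁.continuous).exists_dist_lt φ hε
    exact ⟨g, by rwa [dist_comm, dist_eq_norm] at hg⟩
  · rintro ⟨ψ, rfl⟩
    exact ⟨‖ψ‖ + 1, by positivity,
      fun ε hε => hT₂.exists_norm_comp_sub_lt_and_norm_le T₁.continuous ψ hε⟩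
  · exact tendsto_norm_atTop_of_tendsto_notMem_range (T₁.isClosed_image_closedBall 0)
      (tendsto_iff_norm_sub_tendsto_zero.2 hg) hφ

theorem stmt_3
    {H₁ H₂ : Type*}
    [NormedAddCommGroup H₁] [InnerProductSpace ℂ H₁] [CompleteSpace H₁]
    [NormedAddCommGroup H₂] [InnerProductSpace ℂ H₂] [CompleteSpace H₂]
    (T₂ : H₁ →L[ℂ] H₂) (hT₂ : DenseRange T₂)
    (T₁ : H₂ →L[ℂ] H₁) (hT₁ : T₁ ≠ 0) (hT₁c : IsCompactOperator T₁)
    (hT₁d : DenseRange T₁)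
    (N : H₁ →L[ℂ] H₁) (hN : N = T₁.comp T₂)
    (φ : H₁) :
    (∀ ε : ℝ, 0 < ε → ∃ g : H₁, ‖N g - φ‖ < ε) ∧
    (φ ∈ Set.range T₁ →
      ∃ M : ℝ, 0 ≤ M ∧ ∀ ε : ℝ, 0 < ε →
        ∃ g : H₁, ‖N g - φ‖ < ε ∧ ‖T₂ g‖ ≤ M) ∧
    (φ ∉ Set.range T₁ →
      ∀ g : ℕ → H₁,
        Filter.Tendsto (fun n => ‖N (g n) - φ‖) Filter.atTop (nhds 0) →
        Filter.Tendsto (fun n => ‖T₂ (g n)‖) Filter.atTop Filter.atTop) :=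
  stmt_3_general T₂ hT₂ T₁ hT₁d N hN φ
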